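/- Let μ be any probability distribution on ℕ with tail μ̄(j) := μ({j, j+1, ...}), and let (ξ_n, n ≥ 1) be i.i.d. random variables of law μ. For the IBM(μ) started from the barrier configuration X̂₀ one has X̂_n(1) = ∑_{j=1}^n 1{ξ_j ≥ j}, and if ∑_{j≥1} μ̄(j) = ∞, then X̂_n(1)/(∑_{j=1}^n μ̄(j)) → 1 almost surely as n → ∞ (so in particular X̂_∞(1) = ∞ almost surely). -/

import Mathlib

open MeasureTheory ProbabilityTheory Filter Set
open scoped ENNReal Topology Classical

noncomputable section

/-- A configuration of balls: the number of balls (in `ℤ₊ ∪ {∞}`) in each bin. -/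
abbrev Config := ℤ → ℕ∞

/-- A valid configuration: the support is nonempty and bounded above. -/
def IsConfig (X : Config) : Prop :=
  (∃ j, X j ≠ 0) ∧ ∃ M : ℤ, ∀ j, X j ≠ 0 → j ≤ M

/-- `tailSum X j = ∑_{i ≥ j} X i`. -/
def tailSum (X : Config) (j : ℤ) : ℕ∞ :=
  ⨆ m : ℤ, ∑ i ∈ Finset.Icc j m, X i

/-- One step of the infinite-bin model dynamics: `Phi ξ X` adds one ball to the bin
immediately to the right of the bin containing the `ξ`-th rightmost ball of `X`
(i.e. to bin `B(X,ξ) + 1` where `B(X,ξ) = sup {j : ∑_{i ≥ j} X i ≥ ξ}`), and does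
nothing when `B(X,ξ) = -∞`, i.e. when no bin `j` satisfies `∑_{i ≥ j} X i ≥ ξ`. -/
def Phi (ξ : ℕ) (X : Config) : Config := fun j =>
  X j + (if (ξ : ℕ∞) ≤ tailSum X (j - 1) ∧ ¬ (ξ : ℕ∞) ≤ tailSum X j then 1 else 0)

/-- The infinite-bin model driven by the sequence `ξ`, started from `X₀`:
`X_{n+1} = Phi (ξ n) X_n`. -/
def ibm (X₀ : Config) (ξ : ℕ → ℕ) : ℕ → Config
  | 0 => X₀
  | n + 1 => Phi (ξ n) (ibm X₀ ξ n)

/-- `X_∞(k)`: the limit (= supremum, by monotonicity) of the number of balls in bin `k`. -/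
def ibmLimit (X₀ : Config) (ξ : ℕ → ℕ) (k : ℤ) : ℕ∞ :=
  ⨆ n, ibm X₀ ξ n k

/-- `ξ` is a sequence of i.i.d. random variables with law `μ` on `(Ω, P)`. -/
def IsIIDSeq {Ω : Type*} [MeasurableSpace Ω] (P : Measure Ω) (μ : Measure ℕ)
    (ξ : ℕ → Ω → ℕ) : Prop :=
  (∀ n, Measurable (ξ n)) ∧
    iIndepFun ξ P ∧ ∀ n, P.map (ξ n) = μ

/-- The barrier configuration `X̂₀`: an infinite bin at `0`, all other bins empty. -/
def barrier : Config := fun j => if j = 0 then ⊤ else 0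

/-- The tail `μ̄(j) = μ({j, j+1, ...})` of a distribution on `ℕ`. -/
def tailμ (μ : Measure ℕ) (j : ℕ) : ℝ≥0∞ := μ {i | j ≤ i}

/-- `μ` (represented by the i.i.d. driving sequence `ξ` on `(Ω, P)`) is of type `d`:
almost surely, `d = inf {k ≥ 1 : X̂_∞(k) < ∞}` for the IBM started from the barrier
configuration (with `inf ∅ = ∞` in `ℕ ∪ {∞}`). -/
def IsTypeOf {Ω : Type*} [MeasurableSpace Ω] (P : Measure Ω) (ξ : ℕ → Ω → ℕ)
    (d : ℕ∞) : Prop :=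
  ∀ᵐ ω ∂P, sInf {k : ℕ∞ | ∃ m : ℕ, 1 ≤ m ∧ k = (m : ℕ∞) ∧
    ibmLimit barrier (fun i => ξ i ω) (m : ℤ) < ⊤} = d

/-- `δ ∈ ℤ ∪ {-∞}` is the position `δ(X) = sup {j : X j = ∞}` of the rightmost
infinite bin ("barrier") of `X`, with `sup ∅ = -∞ = ⊥`. -/
def IsRightmostBarrier (X : Config) (δ : WithBot ℤ) : Prop :=
  (∀ j : ℤ, X j = ⊤ → (j : WithBot ℤ) ≤ δ) ∧
    (∀ j : ℤ, (j : WithBot ℤ) ≤ δ → ∃ i : ℤ, j ≤ i ∧ X i = ⊤)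

end

/-! Started from the barrier, after `n` steps the bins `≥ 1` hold exactly `n` balls and bin `0`
is still infinite, so the ball of step `n + 1` goes to bin `1` iff `ξ_{n+1} > n`. Hence
`X̂_n(1)` is a sum of independent indicators with means `μ̄(j)`, and its variance is at most its
mean `Q_n`. Chebyshev's inequality and Borel–Cantelli give `X̂_n(1) / Q_n → 1` along the times at
which `Q_n` first exceeds `k²`; since both `X̂_n(1)` and `Q_n` are nondecreasing and `Q` grows by a
factor tending to `1` between consecutive such times, the convergence extends to all `n`. -/

lemma tailSum_antitone (X : Config) : Antitone (tailSum X) := fun _ _ hij =>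
  iSup_mono fun _ => Finset.sum_le_sum_of_subset (Finset.Icc_subset_Icc_left hij)

lemma le_tailSum (X : Config) (j : ℤ) : X j ≤ tailSum X j :=
  le_iSup_of_le j (by simp)

lemma tailSum_eq_sum_Icc {X : Config} {b : ℤ} (hX : ∀ i, b < i → X i = 0) (j : ℤ) :
    tailSum X j = ∑ i ∈ Finset.Icc j b, X i := by
  refine le_antisymm (iSup_le fun m => ?_) (le_iSup_of_le b le_rfl)
  rcases le_total m b with hmb | hbm
  · exact Finset.sum_le_sum_of_subset (Finset.Icc_subset_Icc_right hmb)
  · refine (Finset.sum_subset (Finset.Icc_subset_Icc_right hbm) fun i hi hi' => hX i ?_).ge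
    simp only [Finset.mem_Icc] at hi hi'
    omega

lemma tailSum_eq_zero {X : Config} {b : ℤ} (hX : ∀ i, b < i → X i = 0) {j : ℤ} (hj : b < j) :
    tailSum X j = 0 := by
  rw [tailSum_eq_sum_Icc hX, Finset.Icc_eq_empty_of_lt hj, Finset.sum_empty]

lemma sum_Icc_ite_boundary {M : Type*} [AddCommMonoidWithOne M] {A : ℤ → Prop} (hA : Antitone A)
    {b : ℤ} (hb : ¬ A b) (j : ℤ) :
    ∑ i ∈ Finset.Icc j b, (if A (i - 1) ∧ ¬ A i then (1 : M) else 0) =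
      if A (j - 1) then 1 else 0 := by
  rcases lt_or_ge b j with hbj | hjb
  · rw [Finset.Icc_eq_empty_of_lt hbj, Finset.sum_empty, if_neg fun h => hb (hA (by omega) h)]
  induction j, hjb using Int.leInductionDown with
  | base => simp only [Finset.Icc_self, Finset.sum_singleton, hb, not_false_eq_true, and_true]
  | pred j hjb ih =>
    rw [← Finset.insert_Icc_left_eq_Icc_sub_one (by omega), Finset.sum_insert (by simp), ih]
    by_cases hj : A (j - 1)
    · rw [if_neg fun h => h.2 hj, if_pos hj, if_pos (hA (by omega) hj), zero_add]
    · rw [if_neg hj, add_zero]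
      exact if_congr (and_iff_left hj) rfl rfl

lemma Phi_eq_zero {X : Config} {b : ℤ} (hX : ∀ i, b < i → X i = 0) {ξ : ℕ} (hξ : 1 ≤ ξ)
    {i : ℤ} (hi : b + 1 < i) : Phi ξ X i = 0 := by
  have : ¬ (ξ : ℕ∞) ≤ 0 := by simpa using Nat.one_le_iff_ne_zero.1 hξ
  simp [Phi, hX i (by omega), tailSum_eq_zero hX (by omega : b < i - 1), this]

/-- Adding the ball at `B(X, ξ) + 1` raises the tail sums exactly at the bins `j ≤ B(X, ξ) + 1`. -/
lemma tailSum_Phi {X : Config} {b : ℤ} (hX : ∀ i, b < i → X i = 0) {ξ : ℕ} (hξ : 1 ≤ ξ)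
    (j : ℤ) :
    tailSum (Phi ξ X) j = tailSum X j + if (ξ : ℕ∞) ≤ tailSum X (j - 1) then 1 else 0 := by
  have hX' : ∀ i, b + 1 < i → X i = 0 := fun i hi => hX i (by omega)
  have hlast : ¬ (ξ : ℕ∞) ≤ tailSum X (b + 1) := by
    simpa [tailSum_eq_zero hX (lt_add_one b)] using Nat.one_le_iff_ne_zero.1 hξ
  rw [tailSum_eq_sum_Icc (fun i => Phi_eq_zero hX hξ), tailSum_eq_sum_Icc hX']
  simp only [Phi, Finset.sum_add_distrib]
  congr 1
  convert sum_Icc_ite_boundary (A := fun i => (ξ : ℕ∞) ≤ tailSum X i)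
    (fun _ _ hij h => h.trans (tailSum_antitone X hij)) hlast j

lemma le_ibm (X₀ : Config) (ξ : ℕ → ℕ) (n : ℕ) (j : ℤ) : X₀ j ≤ ibm X₀ ξ n j := by
  induction n with
  | zero => rfl
  | succ n ih => exact ih.trans le_self_add

lemma tailSum_ibm_barrier_zero (ξ : ℕ → ℕ) (n : ℕ) : tailSum (ibm barrier ξ n) 0 = ⊤ :=
  top_le_iff.1 <| (le_ibm barrier ξ n 0).trans' (by simp [barrier]) |>.trans (le_tailSum _ 0)

lemma ibm_barrier_eq_zero {ξ : ℕ → ℕ} (hξ : ∀ n, 1 ≤ ξ n) (n : ℕ) :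
    ∀ i, (n : ℤ) < i → ibm barrier ξ n i = 0 := by
  induction n with
  | zero => intro i hi; simp [ibm, barrier]; omega
  | succ n ih => exact fun i hi => Phi_eq_zero ih (hξ n) (by omega)

lemma tailSum_ibm_barrier_one {ξ : ℕ → ℕ} (hξ : ∀ n, 1 ≤ ξ n) (n : ℕ) :
    tailSum (ibm barrier ξ n) 1 = n := by
  induction n with
  | zero => exact tailSum_eq_zero (ibm_barrier_eq_zero hξ 0) (by simp)
  | succ n ih =>
    rw [ibm, tailSum_Phi (ibm_barrier_eq_zero hξ n) (hξ n), ih]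
    simp [tailSum_ibm_barrier_zero]

lemma ibm_barrier_one {ξ : ℕ → ℕ} (hξ : ∀ n, 1 ≤ ξ n) (n : ℕ) :
    ibm barrier ξ n 1 = ((∑ j ∈ Finset.range n, if j + 1 ≤ ξ j then 1 else 0 : ℕ) : ℕ∞) := by
  induction n with
  | zero => simp [ibm, barrier]
  | succ n ih =>
    simp only [ibm, Phi, ih, sub_self, tailSum_ibm_barrier_zero, tailSum_ibm_barrier_one hξ,
      le_top, true_and, Finset.sum_range_succ, Nat.cast_le, not_le, Nat.lt_iff_add_one_le]
    split_ifs <;> simp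

section Deterministic

lemma sum_Icc_one_eq_sum_range {M : Type*} [AddCommMonoid M] (f : ℕ → M) (n : ℕ) :
    ∑ j ∈ Finset.Icc 1 n, f j = ∑ j ∈ Finset.range n, f (j + 1) := by
  rw [← Finset.Ico_add_one_right_eq_Icc, Finset.sum_Ico_eq_sum_range]
  simp only [add_comm, Nat.add_sub_cancel]

lemma tendsto_sum_toReal_atTop {f : ℕ → ℝ≥0∞} (hf : ∀ j, f j ≠ ∞) (hsum : ∑' j, f j = ∞) :
    Tendsto (fun n => ∑ j ∈ Finset.range n, (f j).toReal) atTop atTop := by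
  refine (not_summable_iff_tendsto_nat_atTop_of_nonneg fun _ => ENNReal.toReal_nonneg).1
    fun hs => ?_
  have := ENNReal.ofReal_tsum_of_nonneg (fun _ => ENNReal.toReal_nonneg) hs
  simp only [ENNReal.ofReal_toReal (hf _), hsum] at this
  exact ENNReal.ofReal_ne_top this

lemma exists_sq_hittingTimes {Q : ℕ → ℝ} (hQ : Monotone Q) (hQ0 : Q 0 = 0)
    (hstep : ∀ n, Q (n + 1) ≤ Q n + 1) (htop : Tendsto Q atTop atTop) :
    ∃ N K : ℕ → ℕ, (∀ n, N (K n) ≤ n ∧ n < N (K n + 1)) ∧ Tendsto K atTop atTop ∧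
      ∀ k : ℕ, (k : ℝ) ^ 2 ≤ Q (N k) ∧ Q (N k) ≤ k ^ 2 + 1 := by
  have hex : ∀ k : ℕ, ∃ n, (k : ℝ) ^ 2 ≤ Q n := fun k => (htop.eventually_ge_atTop _).exists
  have hQnonneg : ∀ n, 0 ≤ Q n := fun n => hQ0 ▸ hQ (Nat.zero_le n)
  set K : ℕ → ℕ := fun n => Nat.sqrt ⌊Q n⌋₊
  have hK : ∀ n, ((K n : ℕ) : ℝ) ^ 2 ≤ Q n ∧ Q n < ((K n + 1 : ℕ) : ℝ) ^ 2 := by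
    intro n
    have h₁ : ((K n ^ 2 : ℕ) : ℝ) ≤ ⌊Q n⌋₊ := by exact_mod_cast Nat.sqrt_le' _
    have h₂ : (⌊Q n⌋₊ + 1 : ℝ) ≤ ((K n + 1) ^ 2 : ℕ) := by exact_mod_cast Nat.lt_succ_sqrt' _
    push_cast at h₁ h₂ ⊢
    exact ⟨h₁.trans (Nat.floor_le (hQnonneg n)), (Nat.lt_floor_add_one _).trans_le h₂⟩
  refine ⟨fun k => Nat.find (hex k), K, fun n => ⟨Nat.find_min' _ (hK n).1, ?_⟩, ?_, fun k => ?_⟩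
  · by_contra! h
    exact (hK n).2.not_ge ((Nat.find_spec (hex (K n + 1))).trans (hQ h))
  · refine tendsto_atTop.2 fun b => (htop.eventually_ge_atTop ((b * b : ℕ) : ℝ)).mono
      fun n hn => Nat.le_sqrt.2 (Nat.le_floor hn)
  · refine ⟨Nat.find_spec (hex k), ?_⟩
    show Q (Nat.find (hex k)) ≤ _
    rcases h : Nat.find (hex k) with _ | m
    · rw [hQ0]
      positivity
    · have hm : Q m < k ^ 2 := not_le.1 (Nat.find_min (hex k) (by omega))
      linarith [hstep m]

lemma tendsto_succ_div_of_sq_le {a : ℕ → ℝ}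
    (ha : ∀ k : ℕ, (k : ℝ) ^ 2 ≤ a k ∧ a k ≤ k ^ 2 + 1) :
    Tendsto (fun k => a (k + 1) / a k) atTop (𝓝 1) := by
  have hinv := tendsto_one_div_atTop_nhds_zero_nat (𝕜 := ℝ)
  have hupper : Tendsto (fun k : ℕ => 1 + 2 * (1 / (k : ℝ)) + 2 * (1 / (k : ℝ)) ^ 2) atTop
      (𝓝 1) := by
    simpa [add_assoc] using ((hinv.const_mul 2).add ((hinv.pow 2).const_mul 2)).const_add 1
  refine tendsto_of_tendsto_of_tendsto_of_le_of_le' tendsto_const_nhds hupper ?_ ?_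
  all_goals filter_upwards [eventually_ge_atTop 1] with k hk
  all_goals
    have hk : (1 : ℝ) ≤ k := by exact_mod_cast hk
    have hpos : 0 < a k := by nlinarith [ha k]
    obtain ⟨h₁, h₂⟩ := ha (k + 1)
    push_cast at h₁ h₂
  · rw [le_div_iff₀ hpos]
    nlinarith [ha k]
  · rw [div_le_iff₀ hpos]
    have : (1 + 2 * (1 / (k : ℝ)) + 2 * (1 / k) ^ 2) * k ^ 2 = (k + 1) ^ 2 + 1 := by
      field_simp
      ring
    linarith [mul_le_mul_of_nonneg_left (ha k).1
      (by positivity : (0 : ℝ) ≤ 1 + 2 * (1 / (k : ℝ)) + 2 * (1 / k) ^ 2)]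

lemma tendsto_div_of_tendsto_div_comp {S Q : ℕ → ℝ} (hS : Monotone S) (hS0 : ∀ n, 0 ≤ S n)
    (hQ : Monotone Q) {N K : ℕ → ℕ} (hNK : ∀ n, N (K n) ≤ n ∧ n < N (K n + 1))
    (hK : Tendsto K atTop atTop) (hQpos : ∀ᶠ k in atTop, 0 < Q (N k))
    (hQN : Tendsto (fun k => Q (N (k + 1)) / Q (N k)) atTop (𝓝 1))
    (hSN : Tendsto (fun k => S (N k) / Q (N k)) atTop (𝓝 1)) :
    Tendsto (fun n => S n / Q n) atTop (𝓝 1) := by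
  have hlower : Tendsto (fun k => S (N k) / Q (N k) / (Q (N (k + 1)) / Q (N k))) atTop (𝓝 1) := by
    have := hSN.div hQN one_ne_zero
    rwa [div_one] at this
  have hupper : Tendsto (fun k => S (N (k + 1)) / Q (N (k + 1)) * (Q (N (k + 1)) / Q (N k)))
      atTop (𝓝 1) := by
    have := ((tendsto_add_atTop_iff_nat 1).2 hSN).mul hQN
    rwa [one_mul] at this
  refine tendsto_of_tendsto_of_tendsto_of_le_of_le' (hlower.comp hK) (hupper.comp hK) ?_ ?_
  all_goals filter_upwards [hK.eventually hQpos] with n hpos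
  all_goals
    obtain ⟨hleft, hright⟩ := hNK n
    have hQn : 0 < Q n := hpos.trans_le (hQ hleft)
    have hQn' : 0 < Q (N (K n + 1)) := hQn.trans_le (hQ hright.le)
    simp only [Function.comp_apply]
  · rw [div_div_div_cancel_right₀ hpos.ne']
    exact div_le_div₀ (hS0 n) (hS hleft) hQn (hQ hright.le)
  · rw [div_mul_div_cancel₀ hQn'.ne']
    exact div_le_div₀ (hS0 _) (hS hright.le) hpos (hQ hleft)

end Deterministic

section Probability

variable {Ω : Type*} [MeasurableSpace Ω] {P : Measure Ω}

lemma ae_tendsto_of_forall_tsum_ne_top {Y : ℕ → Ω → ℝ} {c : ℝ}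
    (h : ∀ ε > 0, ∑' k, P {ω | ε ≤ |Y k ω - c|} ≠ ∞) :
    ∀ᵐ ω ∂P, Tendsto (fun k => Y k ω) atTop (𝓝 c) := by
  have hm : ∀ m : ℕ, ∀ᵐ ω ∂P, ∀ᶠ k in atTop, |Y k ω - c| < 1 / (m + 1) := fun m =>
    (ae_eventually_notMem (h _ Nat.one_div_pos_of_nat)).mono fun _ hω =>
      hω.mono fun _ hk => not_le.1 hk
  filter_upwards [ae_all_iff.2 hm] with ω hω
  refine Metric.tendsto_nhds.2 fun ε hε => ?_
  obtain ⟨m, hmε⟩ := exists_nat_one_div_lt hε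
  exact (hω m).mono fun k hk => (Real.dist_eq _ _ ▸ hk).trans hmε

variable [IsProbabilityMeasure P] {A : ℕ → Set Ω}

lemma measure_le_abs_sum_indicator_sub_le (hA : ∀ j, MeasurableSet (A j)) (hind : iIndepSet A P)
    (n : ℕ) {c : ℝ} (hc : 0 < c) :
    P {ω | c ≤ |∑ j ∈ Finset.range n, (A j).indicator 1 ω - ∑ j ∈ Finset.range n, P.real (A j)|}
      ≤ ENNReal.ofReal ((∑ j ∈ Finset.range n, P.real (A j)) / c ^ 2) := by
  set I : ℕ → Ω → ℝ := fun j => (A j).indicator 1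
  have hI : ∀ j, MemLp (I j) 2 P := fun j => (memLp_const 1).indicator (hA j)
  have hmean : P[∑ j ∈ Finset.range n, I j] = ∑ j ∈ Finset.range n, P.real (A j) := by
    simp only [Finset.sum_apply]
    rw [integral_finsetSum _ fun j _ => (hI j).integrable one_le_two]
    exact Finset.sum_congr rfl fun j _ => integral_indicator_one (hA j)
  have hvar : variance (∑ j ∈ Finset.range n, I j) P ≤ ∑ j ∈ Finset.range n, P.real (A j) := by
    rw [IndepFun.variance_sum (fun j _ => hI j)
      fun i _ j _ hij => hind.iIndepFun_indicator.indepFun hij]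
    gcongr with j
    have hsq : I j ^ 2 = I j := by
      ext ω
      by_cases hω : ω ∈ A j <;> simp [I, hω]
    calc variance (I j) P ≤ P[I j ^ 2] := variance_le_expectation_sq (hI j).1
      _ = P.real (A j) := by rw [hsq]; exact integral_indicator_one (hA j)
  have hcheb := meas_ge_le_variance_div_sq (memLp_finsetSum' (Finset.range n) fun j _ => hI j) hc
  rw [hmean] at hcheb
  simp only [Finset.sum_apply] at hcheb
  exact hcheb.trans (ENNReal.ofReal_le_ofReal (by gcongr))

lemma ae_tendsto_sum_indicator_div_comp (hA : ∀ j, MeasurableSet (A j)) (hind : iIndepSet A P)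
    {N : ℕ → ℕ} (hN : ∀ k : ℕ, (k : ℝ) ^ 2 ≤ ∑ j ∈ Finset.range (N k), P.real (A j)) :
    ∀ᵐ ω ∂P, Tendsto (fun k => (∑ j ∈ Finset.range (N k), (A j).indicator 1 ω) /
      ∑ j ∈ Finset.range (N k), P.real (A j)) atTop (𝓝 1) := by
  set Q : ℕ → ℝ := fun k => ∑ j ∈ Finset.range (N k), P.real (A j)
  set S : ℕ → Ω → ℝ := fun k ω => ∑ j ∈ Finset.range (N k), (A j).indicator 1 ω
  refine ae_tendsto_of_forall_tsum_ne_top fun ε hε => ?_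
  have hbound : ∀ k : ℕ, P {ω | ε ≤ |S (k + 1) ω / Q (k + 1) - 1|} ≤
      ENNReal.ofReal (1 / ε ^ 2 * (1 / ((k : ℝ) + 1) ^ 2)) := by
    intro k
    have hk : ((k : ℝ) + 1) ^ 2 ≤ Q (k + 1) := by exact_mod_cast hN (k + 1)
    have hQ : 0 < Q (k + 1) := lt_of_lt_of_le (by positivity) hk
    have hset : {ω | ε ≤ |S (k + 1) ω / Q (k + 1) - 1|} =
        {ω | ε * Q (k + 1) ≤ |S (k + 1) ω - Q (k + 1)|} := by
      ext ω
      rw [Set.mem_ofPred_eq, Set.mem_ofPred_eq, div_sub_one hQ.ne', abs_div, abs_of_pos hQ,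
        le_div_iff₀ hQ]
    rw [hset]
    refine (measure_le_abs_sum_indicator_sub_le hA hind _ (mul_pos hε hQ)).trans
      (ENNReal.ofReal_le_ofReal ?_)
    change Q (k + 1) / (ε * Q (k + 1)) ^ 2 ≤ _
    rw [show Q (k + 1) / (ε * Q (k + 1)) ^ 2 = 1 / ε ^ 2 * (1 / Q (k + 1)) by field_simp]
    gcongr
  have hsum : Summable fun k : ℕ => 1 / ε ^ 2 * (1 / ((k : ℝ) + 1) ^ 2) :=
    ((summable_nat_add_iff 1).2 (Real.summable_one_div_nat_pow.2 one_lt_two)).mul_left _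
      |>.congr fun k => by push_cast; rfl
  have hfin : ∑' k : ℕ, P {ω | ε ≤ |S (k + 1) ω / Q (k + 1) - 1|} ≠ ∞ :=
    ne_top_of_le_ne_top ENNReal.ofReal_ne_top <| (ENNReal.tsum_le_tsum hbound).trans_eq
      (ENNReal.ofReal_tsum_of_nonneg (fun _ => by positivity) hsum).symm
  exact fun htop => hfin (ENNReal.tsum_add_one_eq_top htop (measure_ne_top P _))

theorem ae_tendsto_sum_indicator_div_sum_measureReal (hA : ∀ j, MeasurableSet (A j))
    (hind : iIndepSet A P) (hdiv : ∑' j, P (A j) = ∞) :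
    ∀ᵐ ω ∂P, Tendsto (fun n => (∑ j ∈ Finset.range n, (A j).indicator 1 ω) /
      ∑ j ∈ Finset.range n, P.real (A j)) atTop (𝓝 1) := by
  have hmono : ∀ {f : ℕ → ℝ}, (∀ j, 0 ≤ f j) → Monotone fun n => ∑ j ∈ Finset.range n, f j :=
    fun hf => monotone_nat_of_le_succ fun n => by
      rw [Finset.sum_range_succ]; exact le_add_of_nonneg_right (hf n)
  obtain ⟨N, K, hNK, hK, hN⟩ := exists_sq_hittingTimes (hmono fun _ => measureReal_nonneg)
    (Finset.sum_range_zero _)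
    (fun n => by rw [Finset.sum_range_succ]; gcongr; exact measureReal_le_one)
    (tendsto_sum_toReal_atTop (fun j => measure_ne_top P (A j)) hdiv)
  filter_upwards [ae_tendsto_sum_indicator_div_comp hA hind fun k => (hN k).1] with ω hω
  refine tendsto_div_of_tendsto_div_comp (hmono fun _ => Set.indicator_nonneg (by simp) _)
    (fun n => Finset.sum_nonneg fun _ _ => Set.indicator_nonneg (by simp) _)
    (hmono fun _ => measureReal_nonneg) hNK hK ?_ (tendsto_succ_div_of_sq_le hN) hω
  filter_upwards [eventually_ge_atTop 1] with k hk
  exact lt_of_lt_of_le (by positivity) (hN k).1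

end Probability

lemma ProbabilityTheory.iIndepFun.iIndepSet_preimage {Ω ι β : Type*} [MeasurableSpace Ω]
    [MeasurableSpace β] {P : Measure Ω} {X : ι → Ω → β} (hX : iIndepFun X P) {T : ι → Set β}
    (hT : ∀ i, MeasurableSet (T i)) : iIndepSet (fun i => X i ⁻¹' T i) P :=
  (iIndepSet_iff_iIndep _ _).2 <| iIndep_of_iIndep_of_le ((iIndepFun_iff_iIndep _ _ _).1 hX)
    fun i => MeasurableSpace.generateFrom_le <| by
      rintro _ rfl
      exact ⟨T i, hT i, rfl⟩

namespace IsIIDSeq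

variable {Ω : Type*} [MeasurableSpace Ω] {P : Measure Ω} {μ : Measure ℕ} {ξ : ℕ → Ω → ℕ}

lemma measure_preimage (hξ : IsIIDSeq P μ ξ) (j : ℕ) (T : Set ℕ) : P (ξ j ⁻¹' T) = μ T := by
  rw [← hξ.2.2 j, Measure.map_apply (hξ.1 j) .of_discrete]

lemma ae_one_le (hξ : IsIIDSeq P μ ξ) (hμ0 : μ {0} = 0) : ∀ᵐ ω ∂P, ∀ j, 1 ≤ ξ j ω :=
  ae_all_iff.2 fun j => by
    rw [ae_iff, ← hμ0, ← hξ.measure_preimage j]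
    simp [Set.preimage]

variable [IsProbabilityMeasure P]

lemma tendsto_sum_tailμ_atTop (hξ : IsIIDSeq P μ ξ) (hdiv : ∑' j : ℕ, tailμ μ (j + 1) = ⊤) :
    Tendsto (fun n => ∑ j ∈ Finset.Icc 1 n, (tailμ μ j).toReal) atTop atTop := by
  simp only [sum_Icc_one_eq_sum_range]
  refine tendsto_sum_toReal_atTop (fun j => ?_) hdiv
  rw [tailμ, ← hξ.measure_preimage j]
  exact measure_ne_top P _

lemma ae_tendsto_count_div_sum_tailμ (hξ : IsIIDSeq P μ ξ)
    (hdiv : ∑' j : ℕ, tailμ μ (j + 1) = ⊤) :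
    ∀ᵐ ω ∂P, Tendsto (fun n => ((∑ j ∈ Finset.range n, if j + 1 ≤ ξ j ω then 1 else 0 : ℕ) : ℝ) /
      ∑ j ∈ Finset.Icc 1 n, (tailμ μ j).toReal) atTop (𝓝 1) := by
  set A : ℕ → Set Ω := fun j => ξ j ⁻¹' {x | j + 1 ≤ x}
  have hA : ∀ j, P (A j) = tailμ μ (j + 1) := fun j => hξ.measure_preimage j _
  filter_upwards [ae_tendsto_sum_indicator_div_sum_measureReal (A := A) (fun j => hξ.1 j .of_discrete)
    (hξ.2.1.iIndepSet_preimage fun _ => .of_discrete) (by simpa only [hA] using hdiv)] with ω hω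
  refine hω.congr fun n => ?_
  simp only [measureReal_def, hA, sum_Icc_one_eq_sum_range]
  simp [A, Set.indicator_apply]

end IsIIDSeq

theorem stmt19_general {Ω : Type*} [MeasurableSpace Ω] (P : Measure Ω) [IsProbabilityMeasure P]
    (μ : Measure ℕ) (hμ0 : μ {0} = 0)
    (ξ : ℕ → Ω → ℕ) (hξ : IsIIDSeq P μ ξ) :
    (∀ᵐ ω ∂P, ∀ n : ℕ,
      ibm barrier (fun i => ξ i ω) n 1 =
        ((∑ j ∈ Finset.range n, if j + 1 ≤ ξ j ω then 1 else 0 : ℕ) : ℕ∞)) ∧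
    (∑' j : ℕ, tailμ μ (j + 1) = ⊤ →
      (∀ᵐ ω ∂P, Tendsto
        (fun n : ℕ => ((ibm barrier (fun i => ξ i ω) n 1).toNat : ℝ) /
          (∑ j ∈ Finset.Icc 1 n, (tailμ μ j).toReal))
        atTop (𝓝 1)) ∧
      (∀ᵐ ω ∂P, ibmLimit barrier (fun i => ξ i ω) 1 = ⊤)) := by
  have hbin : ∀ᵐ ω ∂P, ∀ n : ℕ, ibm barrier (fun i => ξ i ω) n 1 =
      ((∑ j ∈ Finset.range n, if j + 1 ≤ ξ j ω then 1 else 0 : ℕ) : ℕ∞) := by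
    filter_upwards [hξ.ae_one_le hμ0] with ω hω using ibm_barrier_one hω
  refine ⟨hbin, fun hdiv => ⟨?_, ?_⟩⟩
  all_goals filter_upwards [hbin, hξ.ae_tendsto_count_div_sum_tailμ hdiv] with ω hω hratio
  · simpa only [hω, ENat.toNat_natCast] using hratio
  · rw [ibmLimit, iSup_congr hω, ENat.iSup_natCast_eq_top]
    exact not_bddAbove_of_tendsto_atTop <| tendsto_natCast_atTop_iff.1 <|
      (hξ.tendsto_sum_tailμ_atTop hdiv).num one_pos hratio

/-- For any law `μ` and the IBM(μ) started from the barrier configuration,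
a.s. `X̂_n(1) = ∑_{j=1}^n 1_{ξ_j ≥ j}` for all `n` (here `ξ_j` is the `j`-th sample, i.e.
the driving variable of step `j`), and if `∑_{j ≥ 1} μ̄(j) = ∞`, then
`X̂_n(1) / ∑_{j=1}^n μ̄(j) → 1` a.s., so in particular `X̂_∞(1) = ∞` a.s. -/
theorem stmt19 {Ω : Type*} [MeasurableSpace Ω] (P : Measure Ω) [IsProbabilityMeasure P]
    (μ : Measure ℕ) [IsProbabilityMeasure μ] (hμ0 : μ {0} = 0)
    (ξ : ℕ → Ω → ℕ) (hξ : IsIIDSeq P μ ξ) :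
    (∀ᵐ ω ∂P, ∀ n : ℕ,
      ibm barrier (fun i => ξ i ω) n 1 =
        ((∑ j ∈ Finset.range n, if j + 1 ≤ ξ j ω then 1 else 0 : ℕ) : ℕ∞)) ∧
    (∑' j : ℕ, tailμ μ (j + 1) = ⊤ →
      (∀ᵐ ω ∂P, Tendsto
        (fun n : ℕ => ((ibm barrier (fun i => ξ i ω) n 1).toNat : ℝ) /
          (∑ j ∈ Finset.Icc 1 n, (tailμ μ j).toReal))
        atTop (𝓝 1)) ∧
      (∀ᵐ ω ∂P, ibmLimit barrier (fun i => ξ i ω) 1 = ⊤)) :=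
  stmt19_general P μ hμ0 ξ hξ
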